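/- Let 𝒟 = (Λ₁,…,Λ_μ) be a basis of the local dual space 𝒟_ζ and consider the system 𝒟f(x) of μ·s polynomials (Λ_i(∂_x)[f_k])_{i=1,…,μ; k=1,…,s}, where Λ_i(∂_x) applies the differential operator and evaluates at the point x. Then the (μ·s) × n Jacobian matrix of 𝒟f with respect to x has full rank n at x = ζ. -/

import Mathlib

open MvPolynomial

/-- Total degree of a multi-exponent. -/
def multideg {n : ℕ} (α : Fin n →₀ ℕ) : ℕ := α.sum fun _ k => k

/-- Normalized derivative `d^α g = (1/α!) ∂^α g` as a polynomial. -/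
noncomputable def nderiv {n : ℕ} (α : Fin n →₀ ℕ) (g : MvPolynomial (Fin n) ℝ) :
    MvPolynomial (Fin n) ℝ :=
  ∑ γ ∈ g.support,
    monomial (γ - α) (((∏ i, (γ i).choose (α i) : ℕ) : ℝ) * coeff γ g)

/-- `Λ(∂_x)[g]`: apply the differential operator with coefficients `Λ`
(in the normalized basis `d^α`), keeping a polynomial result. -/
noncomputable def applyPoly {n : ℕ} (Λ : (Fin n →₀ ℕ) →₀ ℝ)
    (g : MvPolynomial (Fin n) ℝ) : MvPolynomial (Fin n) ℝ :=
  Λ.sum fun α c => c • nderiv α g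

/-- `Λ ↦ Λ^ζ[g]`, as a linear map in `Λ`. -/
noncomputable def applyAtL {n : ℕ} (ζ : Fin n → ℝ) (g : MvPolynomial (Fin n) ℝ) :
    ((Fin n →₀ ℕ) →₀ ℝ) →ₗ[ℝ] ℝ :=
  Finsupp.linearCombination ℝ (fun α => eval ζ (nderiv α g))

/-- `Λ^ζ[g]`. -/
noncomputable def applyAt {n : ℕ} (ζ : Fin n → ℝ) (Λ : (Fin n →₀ ℕ) →₀ ℝ)
    (g : MvPolynomial (Fin n) ℝ) : ℝ := applyAtL ζ g Λ

/-- The orthogonal (dual space) of an ideal at ζ. -/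
noncomputable def dualSpace {n : ℕ} (ζ : Fin n → ℝ)
    (Q : Ideal (MvPolynomial (Fin n) ℝ)) : Submodule ℝ ((Fin n →₀ ℕ) →₀ ℝ) :=
  ⨅ p ∈ Q, LinearMap.ker (applyAtL ζ p)

/-- The maximal ideal at ζ. -/
noncomputable def maxIdealAt {n : ℕ} (ζ : Fin n → ℝ) : Ideal (MvPolynomial (Fin n) ℝ) :=
  Ideal.span (Set.range fun i => X i - C (ζ i))

/-- `Q` is the primary component of `I` at an isolated root `ζ`. -/
def IsPrimaryComponentAt {n : ℕ} (ζ : Fin n → ℝ)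
    (I Q : Ideal (MvPolynomial (Fin n) ℝ)) : Prop :=
  Q.IsPrimary ∧ Q.radical = maxIdealAt ζ ∧
    ∃ S : Finset (Ideal (MvPolynomial (Fin n) ℝ)),
      (∀ P ∈ S, P.IsPrimary ∧ ¬ P.radical ≤ maxIdealAt ζ) ∧ I = S.inf id ⊓ Q

/-- Elements of the dual space of degree at most `t`. -/
noncomputable def dualSpaceLE {n : ℕ} (ζ : Fin n → ℝ)
    (Q : Ideal (MvPolynomial (Fin n) ℝ)) (t : ℕ) :
    Submodule ℝ ((Fin n →₀ ℕ) →₀ ℝ) :=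
  dualSpace ζ Q ⊓ Finsupp.supported ℝ ℝ {α | multideg α ≤ t}

/-- The derivation `∂/∂∂_i` in the normalized coordinates: shift of coefficients. -/
noncomputable def dshift {n : ℕ} (i : Fin n) (Λ : (Fin n →₀ ℕ) →₀ ℝ) :
    (Fin n →₀ ℕ) →₀ ℝ :=
  Finsupp.comapDomain (fun β => β + Finsupp.single i 1) Λ
    (fun _ _ _ _ h => add_right_cancel h)

/-- Truncation: set `∂_j = 0` for `j > k`. -/
noncomputable def trunck {n : ℕ} (k : Fin n) (Λ : (Fin n →₀ ℕ) →₀ ℝ) :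
    (Fin n →₀ ℕ) →₀ ℝ :=
  Λ.filter (fun α => ∀ j, k < j → α j = 0)

/-- Integration with respect to `∂_k` in the normalized coordinates. -/
noncomputable def intk {n : ℕ} (k : Fin n) (Λ : (Fin n →₀ ℕ) →₀ ℝ) :
    (Fin n →₀ ℕ) →₀ ℝ :=
  Finsupp.mapDomain (fun α => α + Finsupp.single k 1) Λ

/-!
If `v` lies in the kernel of the Jacobian, the directional derivative `D = ∑ v_j ∂_j` satisfies
`Λ[D f_k] = 0` for every `Λ` in the local dual space `𝒟`. The polynomials killed by `𝒟` form an
ideal containing `Q` (because `𝒟` is stable under `dshift`), so the Leibniz rule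
gives `Λ[D g] = 0` for all `g ∈ I`: the adjoint `Λ ↦ Λ ∘ D` maps `𝒟` into the orthogonal of `I`,
which is `𝒟` because `ζ` is isolated. On symbols the adjoint is multiplication by the linear form
`∑ v_j ξ_j`, so for `v ≠ 0` it is injective, hence surjective on the finite-dimensional `𝒟`. But
evaluation at `ζ` belongs to `𝒟` and has a nonzero constant term, which no image of the adjoint
has. Hence `v = 0`.
-/

open Finset in
theorem Finset.prod_univ_eq_mul_prod_erase_of_eqOn {ι M : Type*} [Fintype ι] [DecidableEq ι]
    [CommMonoid M] {F G : ι → M} (j : ι) (h : ∀ l ≠ j, F l = G l) :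
    ∏ l, F l = F j * ∏ l ∈ univ.erase j, G l := by
  rw [← mul_prod_erase univ F (mem_univ j)]
  exact congrArg _ (prod_congr rfl fun l hl => h l (ne_of_mem_erase hl))

theorem Finsupp.add_single_one_apply_of_ne {σ : Type*} (α : σ →₀ ℕ) {i l : σ} (h : l ≠ i) :
    (α + Finsupp.single i 1 : σ →₀ ℕ) l = α l := by
  simp [Finsupp.single_eq_of_ne h]

theorem Finsupp.sub_single_one_apply_of_ne {σ : Type*} (α : σ →₀ ℕ) {i l : σ} (h : l ≠ i) :
    (α - Finsupp.single i 1 : σ →₀ ℕ) l = α l := by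
  simp [Finsupp.single_eq_of_ne h]

section NormalizedDerivative

variable {n : ℕ}

theorem nderiv_monomial (α γ : Fin n →₀ ℕ) (c : ℝ) :
    nderiv α (monomial γ c) = monomial (γ - α) ((∏ i, (γ i).choose (α i) : ℕ) * c) := by
  by_cases hc : c = 0
  · simp [nderiv, hc]
  · classical
    simp [nderiv, support_monomial, hc]

theorem nderiv_add (α : Fin n →₀ ℕ) (g h : MvPolynomial (Fin n) ℝ) :
    nderiv α (g + h) = nderiv α g + nderiv α h := by
  have hsum (p : MvPolynomial (Fin n) ℝ) : nderiv α p = (AddMonoidAlgebra.coeff p).sum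
      fun γ c => monomial (γ - α) (((∏ i, (γ i).choose (α i) : ℕ) : ℝ) * c) := by
    rw [sum_def]; rfl
  rw [hsum, hsum, hsum, AddMonoidAlgebra.coeff_add]
  exact Finsupp.sum_add_index' (by simp) (by simp [mul_add])

theorem nderiv_smul (α : Fin n →₀ ℕ) (r : ℝ) (g : MvPolynomial (Fin n) ℝ) :
    nderiv α (r • g) = r • nderiv α g := by
  induction g using MvPolynomial.induction_on' with
  | monomial γ c => simp only [smul_monomial, nderiv_monomial, smul_eq_mul, mul_left_comm]
  | add p q hp hq => rw [smul_add, nderiv_add, nderiv_add, hp, hq, smul_add]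

noncomputable def nderivₗ (α : Fin n →₀ ℕ) :
    MvPolynomial (Fin n) ℝ →ₗ[ℝ] MvPolynomial (Fin n) ℝ where
  toFun := nderiv α
  map_add' := nderiv_add α
  map_smul' := nderiv_smul α

theorem nderiv_zero (g : MvPolynomial (Fin n) ℝ) : nderiv 0 g = g := by
  induction g using MvPolynomial.induction_on' with
  | monomial γ c => simp [nderiv_monomial]
  | add p q hp hq => rw [nderiv_add, hp, hq]

theorem prod_choose_add_single_mul (α γ : Fin n →₀ ℕ) (j : Fin n) :
    (∏ l, (γ l).choose ((α + Finsupp.single j 1 : Fin n →₀ ℕ) l)) * (α j + 1) =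
      (∏ l, (γ l).choose (α l)) * (γ j - α j) := by
  rw [Finset.prod_univ_eq_mul_prod_erase_of_eqOn (G := fun l => (γ l).choose (α l)) j
      fun l hl => by rw [Finsupp.add_single_one_apply_of_ne α hl],
    ← Finset.mul_prod_erase _ _ (Finset.mem_univ j)]
  simp only [Finsupp.add_apply, Finsupp.single_eq_same]
  rw [mul_right_comm, Nat.choose_succ_right_eq, mul_right_comm]

theorem prod_choose_sub_single_mul (α γ : Fin n →₀ ℕ) (j : Fin n) :
    (∏ l, ((γ - Finsupp.single j 1 : Fin n →₀ ℕ) l).choose (α l)) * γ j =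
      (∏ l, (γ l).choose ((α + Finsupp.single j 1 : Fin n →₀ ℕ) l)) * (α j + 1) := by
  rw [Finset.prod_univ_eq_mul_prod_erase_of_eqOn (G := fun l => (γ l).choose (α l)) j
      fun l hl => by rw [Finsupp.sub_single_one_apply_of_ne γ hl],
    Finset.prod_univ_eq_mul_prod_erase_of_eqOn (G := fun l => (γ l).choose (α l)) j
      fun l hl => by rw [Finsupp.add_single_one_apply_of_ne α hl]]
  simp only [Finsupp.add_apply, Finsupp.tsub_apply, Finsupp.single_eq_same]
  rw [mul_right_comm, mul_right_comm _ _ (α j + 1)]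
  congr 1
  rcases γ j with _ | m
  · simp
  · rw [Nat.add_sub_cancel, mul_comm, Nat.add_one_mul_choose_eq]

theorem pderiv_nderiv (α : Fin n →₀ ℕ) (j : Fin n) (g : MvPolynomial (Fin n) ℝ) :
    pderiv j (nderiv α g) = ((α j + 1 : ℕ) : ℝ) • nderiv (α + Finsupp.single j 1) g := by
  induction g using MvPolynomial.induction_on' with
  | add p q hp hq => rw [nderiv_add, map_add, hp, hq, nderiv_add, smul_add]
  | monomial γ c =>
    rw [nderiv_monomial, pderiv_monomial, nderiv_monomial, smul_monomial, tsub_tsub]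
    congr 1
    have key := congrArg (Nat.cast : ℕ → ℝ) (prod_choose_add_single_mul α γ j)
    simp only [Nat.cast_mul, Nat.cast_prod, Nat.cast_add, Nat.cast_one, Finsupp.tsub_apply]
      at key ⊢
    rw [smul_eq_mul]
    linear_combination -c * key

theorem nderiv_pderiv (α : Fin n →₀ ℕ) (j : Fin n) (g : MvPolynomial (Fin n) ℝ) :
    nderiv α (pderiv j g) = ((α j + 1 : ℕ) : ℝ) • nderiv (α + Finsupp.single j 1) g := by
  induction g using MvPolynomial.induction_on' with
  | add p q hp hq => rw [map_add, nderiv_add, nderiv_add, hp, hq, smul_add]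
  | monomial γ c =>
    rw [pderiv_monomial, nderiv_monomial, nderiv_monomial, smul_monomial, tsub_tsub,
      add_comm (Finsupp.single j 1)]
    congr 1
    have key := congrArg (Nat.cast : ℕ → ℝ) (prod_choose_sub_single_mul α γ j)
    simp only [Nat.cast_mul, Nat.cast_prod, Nat.cast_add, Nat.cast_one] at key ⊢
    rw [smul_eq_mul]
    linear_combination c * key

end NormalizedDerivative

section DualPairing

variable {n : ℕ} (ζ : Fin n → ℝ)

noncomputable def dualPairing :
    ((Fin n →₀ ℕ) →₀ ℝ) →ₗ[ℝ] MvPolynomial (Fin n) ℝ →ₗ[ℝ] ℝ :=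
  Finsupp.linearCombination ℝ fun α => (aeval ζ).toLinearMap ∘ₗ nderivₗ α

theorem dualPairing_single (α : Fin n →₀ ℕ) (c : ℝ) (g : MvPolynomial (Fin n) ℝ) :
    dualPairing ζ (Finsupp.single α c) g = c * eval ζ (nderiv α g) := by
  simp [dualPairing, nderivₗ]

theorem dualPairing_eq_applyAt (Λ : (Fin n →₀ ℕ) →₀ ℝ) (g : MvPolynomial (Fin n) ℝ) :
    dualPairing ζ Λ g = applyAt ζ Λ g := by
  simp [dualPairing, applyAt, applyAtL, Finsupp.linearCombination_apply, nderivₗ,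
    LinearMap.finsupp_sum_apply]

theorem mem_dualSpace_iff {Q : Ideal (MvPolynomial (Fin n) ℝ)} {Λ : (Fin n →₀ ℕ) →₀ ℝ} :
    Λ ∈ dualSpace ζ Q ↔ ∀ p ∈ Q, dualPairing ζ Λ p = 0 := by
  simp [dualSpace, Submodule.mem_iInf, dualPairing_eq_applyAt, applyAt]

theorem eval_pderiv_applyPoly (Λ : (Fin n →₀ ℕ) →₀ ℝ) (g : MvPolynomial (Fin n) ℝ) (j : Fin n) :
    eval ζ (pderiv j (applyPoly Λ g)) = dualPairing ζ Λ (pderiv j g) := by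
  have hcomm (α : Fin n →₀ ℕ) : pderiv j (nderiv α g) = nderiv α (pderiv j g) := by
    rw [pderiv_nderiv, nderiv_pderiv]
  simp [applyPoly, map_finsuppSum, hcomm, dualPairing_eq_applyAt, applyAt, applyAtL,
    Finsupp.linearCombination_apply]

end DualPairing

section Shift

variable {n : ℕ} (ζ : Fin n → ℝ)

/-- The one-variable case of `eval_nderiv_X_sub_C_mul`, for the monomial `x ^ g`. -/
theorem choose_mul_pow_succ_sub (g a : ℕ) (z : ℝ) :
    ((g + 1).choose a : ℝ) * z ^ (g + 1 - a) - z * ((g.choose a : ℝ) * z ^ (g - a)) =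
      if a = 0 then 0 else (g.choose (a - 1) : ℝ) * z ^ (g - (a - 1)) := by
  rcases a with _ | b
  · simp only [Nat.choose_zero_right, Nat.cast_one, tsub_zero, if_true, pow_succ]
    ring
  · rw [if_neg b.succ_ne_zero, Nat.choose_succ_succ', Nat.add_sub_add_right, Nat.add_sub_cancel]
    rcases lt_or_ge g (b + 1) with h | h
    · rw [Nat.choose_eq_zero_of_lt h]
      push_cast
      ring
    · obtain ⟨k, rfl⟩ := Nat.exists_eq_add_of_le h
      rw [show b + 1 + k - b = k + 1 by omega, show b + 1 + k - (b + 1) = k by omega]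
      push_cast
      ring

theorem eval_nderiv_monomial (α γ : Fin n →₀ ℕ) (c : ℝ) :
    eval ζ (nderiv α (monomial γ c)) =
      c * ∏ l, ((γ l).choose (α l) * ζ l ^ (γ l - α l) : ℝ) := by
  rw [nderiv_monomial, eval_monomial, Finsupp.prod_fintype _ _ fun _ => pow_zero _,
    Finset.prod_mul_distrib, Nat.cast_prod]
  simp only [Finsupp.tsub_apply]
  ring

theorem eval_nderiv_X_sub_C_mul (α : Fin n →₀ ℕ) (i : Fin n) (g : MvPolynomial (Fin n) ℝ) :
    eval ζ (nderiv α ((X i - C (ζ i)) * g)) =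
      if α i = 0 then 0 else eval ζ (nderiv (α - Finsupp.single i 1) g) := by
  induction g using MvPolynomial.induction_on' with
  | add p q hp hq =>
    rw [mul_add, nderiv_add, map_add, hp, hq, nderiv_add, map_add]
    split_ifs <;> simp
  | monomial γ c =>
    have hmul : (X i - C (ζ i)) * monomial γ c =
        monomial (γ + Finsupp.single i 1) c - monomial γ (ζ i * c) := by
      rw [sub_mul, C_mul_monomial, X, monomial_mul, one_mul, add_comm]
    have hsub : nderiv α (monomial (γ + Finsupp.single i 1) c - monomial γ (ζ i * c)) =
        nderiv α (monomial (γ + Finsupp.single i 1) c) - nderiv α (monomial γ (ζ i * c)) := by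
      rw [eq_sub_iff_add_eq, ← nderiv_add, sub_add_cancel]
    set G : Fin n → ℝ := fun l => (γ l).choose (α l) * ζ l ^ (γ l - α l)
    rw [hmul, hsub, map_sub, eval_nderiv_monomial, eval_nderiv_monomial, eval_nderiv_monomial,
      Finset.prod_univ_eq_mul_prod_erase_of_eqOn (G := G) i fun l hl => by
        simp only [G, Finsupp.add_single_one_apply_of_ne γ hl],
      Finset.prod_univ_eq_mul_prod_erase_of_eqOn (G := G) i fun _ _ => rfl,
      Finset.prod_univ_eq_mul_prod_erase_of_eqOn (G := G) i fun l hl => by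
        simp only [G, Finsupp.sub_single_one_apply_of_ne α hl]]
    have key := choose_mul_pow_succ_sub (γ i) (α i) (ζ i)
    simp only [G, Finsupp.add_apply, Finsupp.tsub_apply, Finsupp.single_eq_same] at key ⊢
    split_ifs at key ⊢ with hα
    · linear_combination c * (∏ l ∈ Finset.univ.erase i, G l) * key
    · linear_combination c * (∏ l ∈ Finset.univ.erase i, G l) * key

theorem dshift_single (i : Fin n) (α : Fin n →₀ ℕ) (c : ℝ) :
    dshift i (Finsupp.single α c) =
      if α i = 0 then 0 else Finsupp.single (α - Finsupp.single i 1) c := by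
  split_ifs with hα
  · ext β
    simp only [dshift, Finsupp.coe_zero, Pi.zero_apply]
    refine Finsupp.single_eq_of_ne fun h => ?_
    simpa [hα] using congrArg (· i) h
  · conv_lhs => rw [← tsub_add_cancel_of_le (Finsupp.single_le_iff.2 (Nat.one_le_iff_ne_zero.2 hα))]
    exact Finsupp.comapDomain_single _ _ _ _

theorem dualPairing_dshift (i : Fin n) (Λ : (Fin n →₀ ℕ) →₀ ℝ) (g : MvPolynomial (Fin n) ℝ) :
    dualPairing ζ (dshift i Λ) g = dualPairing ζ Λ ((X i - C (ζ i)) * g) := by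
  have hlin : (dualPairing ζ).flip g ∘ₗ
      Finsupp.lcomapDomain (fun β => β + Finsupp.single i 1) (add_left_injective _) =
      (dualPairing ζ).flip ((X i - C (ζ i)) * g) := by
    refine Finsupp.lhom_ext fun α c => ?_
    have := dshift_single i α c
    simp only [dshift] at this
    simp only [LinearMap.comp_apply, Finsupp.lcomapDomain_apply, LinearMap.flip_apply, this,
      dualPairing_single, eval_nderiv_X_sub_C_mul]
    split_ifs <;> simp [dualPairing_single]
  exact LinearMap.congr_fun hlin Λ

end Shift

section Localization

variable {n : ℕ} (ζ : Fin n → ℝ)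

theorem dshift_mem_dualSpace {Q : Ideal (MvPolynomial (Fin n) ℝ)} {Λ : (Fin n →₀ ℕ) →₀ ℝ}
    (hΛ : Λ ∈ dualSpace ζ Q) (i : Fin n) : dshift i Λ ∈ dualSpace ζ Q := by
  rw [mem_dualSpace_iff] at hΛ ⊢
  intro p hp
  rw [dualPairing_dshift]
  exact hΛ _ (Q.mul_mem_left _ hp)

noncomputable def dualSpacePerp (Q : Ideal (MvPolynomial (Fin n) ℝ)) :
    Ideal (MvPolynomial (Fin n) ℝ) where
  carrier := {g | ∀ Λ ∈ dualSpace ζ Q, dualPairing ζ Λ g = 0}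
  zero_mem' _ _ := map_zero _
  add_mem' ha hb Λ hΛ := by rw [map_add, ha Λ hΛ, hb Λ hΛ, add_zero]
  smul_mem' c g hg := by
    simp only [smul_eq_mul, Set.mem_ofPred_eq] at hg ⊢
    induction c using MvPolynomial.induction_on with
    | C a => intro Λ hΛ; rw [← smul_eq_C_mul, map_smul, hg Λ hΛ, smul_zero]
    | add p q hp hq => intro Λ hΛ; rw [add_mul, map_add, hp Λ hΛ, hq Λ hΛ, add_zero]
    | mul_X p i hp =>
      intro Λ hΛ
      have hsplit : p * X i * g = (X i - C (ζ i)) * (p * g) + ζ i • (p * g) := by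
        rw [smul_eq_C_mul]; ring
      rw [hsplit, map_add, map_smul, ← dualPairing_dshift, hp _ (dshift_mem_dualSpace ζ hΛ i),
        hp Λ hΛ, smul_zero, add_zero]

theorem le_dualSpacePerp (Q : Ideal (MvPolynomial (Fin n) ℝ)) : Q ≤ dualSpacePerp ζ Q :=
  fun p hp _ hΛ => (mem_dualSpace_iff ζ).1 hΛ p hp

theorem derivation_mem_dualSpacePerp {Q : Ideal (MvPolynomial (Fin n) ℝ)}
    (D : Derivation ℝ (MvPolynomial (Fin n) ℝ) (MvPolynomial (Fin n) ℝ))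
    {s : Set (MvPolynomial (Fin n) ℝ)} (hsQ : Ideal.span s ≤ Q)
    (hs : ∀ x ∈ s, D x ∈ dualSpacePerp ζ Q) {g : MvPolynomial (Fin n) ℝ}
    (hg : g ∈ Ideal.span s) : D g ∈ dualSpacePerp ζ Q := by
  induction hg using Submodule.span_induction with
  | mem x hx => exact hs x hx
  | zero => rw [map_zero]; exact zero_mem _
  | add x y _ _ hx hy => rw [map_add]; exact add_mem hx hy
  | smul c x hxs hx =>
    rw [smul_eq_mul, Derivation.leibniz, smul_eq_mul, smul_eq_mul]
    exact add_mem (Ideal.mul_mem_left _ c hx)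
      (Ideal.mul_mem_right _ _ (le_dualSpacePerp ζ Q (hsQ hxs)))

theorem sub_C_eval_mem_maxIdealAt (p : MvPolynomial (Fin n) ℝ) :
    p - C (eval ζ p) ∈ maxIdealAt ζ := by
  induction p using MvPolynomial.induction_on with
  | C a => simp
  | add p q hp hq =>
    rw [map_add, map_add, add_sub_add_comm]
    exact add_mem hp hq
  | mul_X p i hp =>
    have hsplit : p * X i - C (eval ζ (p * X i)) =
        p * (X i - C (ζ i)) + C (ζ i) * (p - C (eval ζ p)) := by
      rw [map_mul, eval_X, map_mul]; ring
    rw [hsplit]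
    exact add_mem (Ideal.mul_mem_left _ _ (Ideal.subset_span ⟨i, rfl⟩))
      (Ideal.mul_mem_left _ _ hp)

theorem maxIdealAt_eq_ker : maxIdealAt ζ = RingHom.ker (eval ζ) := by
  refine le_antisymm ?_ fun p hp => ?_
  · rw [maxIdealAt, Ideal.span_le]
    rintro _ ⟨i, rfl⟩
    simp
  · simpa [RingHom.mem_ker.1 hp] using sub_C_eval_mem_maxIdealAt ζ p

theorem maxIdealAt_isMaximal : (maxIdealAt ζ).IsMaximal := by
  rw [maxIdealAt_eq_ker]
  exact RingHom.ker_isMaximal_of_surjective _ fun x => ⟨C x, eval_C x⟩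

theorem dualPairing_eq_zero_of_mem_pow {k : ℕ} {Λ : (Fin n →₀ ℕ) →₀ ℝ}
    (hΛ : ∀ α ∈ Λ.support, α.degree < k) {q : MvPolynomial (Fin n) ℝ}
    (hq : q ∈ maxIdealAt ζ ^ k) : dualPairing ζ Λ q = 0 := by
  induction k generalizing Λ q with
  | zero =>
    have hΛ0 : Λ = 0 := Finsupp.support_eq_empty.1 <|
      Finset.eq_empty_of_forall_notMem fun α hα => Nat.not_lt_zero _ (hΛ α hα)
    rw [hΛ0, map_zero, LinearMap.zero_apply]
  | succ k ih =>
    rw [pow_succ] at hq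
    refine Submodule.mul_induction_on hq (fun a ha b hb => ?_)
      fun x y hx hy => by rw [map_add, hx, hy, add_zero]
    induction hb using Submodule.span_induction generalizing a with
    | mem x hx =>
      obtain ⟨i, rfl⟩ := hx
      rw [mul_comm, ← dualPairing_dshift]
      refine ih (fun β hβ => ?_) ha
      have hβ' : dshift i Λ β ≠ 0 := Finsupp.mem_support_iff.1 hβ
      have := hΛ (β + Finsupp.single i 1) (Finsupp.mem_support_iff.2 hβ')
      rw [map_add, Finsupp.degree_single] at this
      omega
    | zero => rw [mul_zero, map_zero]
    | add x y _ _ hx hy => rw [mul_add, map_add, hx a ha, hy a ha, add_zero]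
    | smul r x _ hx =>
      rw [smul_eq_mul, ← mul_assoc, mul_comm a r]
      exact hx _ (Ideal.mul_mem_left _ r ha)

theorem dualPairing_eq_zero_of_sup_eq_top {J Q : Ideal (MvPolynomial (Fin n) ℝ)}
    (hJ : J ⊔ maxIdealAt ζ = ⊤) {Λ : (Fin n →₀ ℕ) →₀ ℝ}
    (hΛ : ∀ g ∈ J ⊓ Q, dualPairing ζ Λ g = 0) {q : MvPolynomial (Fin n) ℝ} (hq : q ∈ Q) :
    dualPairing ζ Λ q = 0 := by
  obtain ⟨a, ha, b, hb, hab⟩ := Submodule.mem_sup.1 <|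
    (Ideal.sup_pow_eq_top (n := Λ.support.sup Finsupp.degree + 1) hJ).symm ▸
      Submodule.mem_top (x := (1 : MvPolynomial (Fin n) ℝ))
  calc dualPairing ζ Λ q = dualPairing ζ Λ (a * q) + dualPairing ζ Λ (b * q) := by
        rw [← map_add, ← add_mul, hab, one_mul]
    _ = 0 := by
      rw [hΛ _ ⟨J.mul_mem_right q ha, Q.mul_mem_left a hq⟩,
        dualPairing_eq_zero_of_mem_pow ζ (fun α hα => Nat.lt_succ_of_le (Finset.le_sup hα))
          (Ideal.mul_mem_right q _ hb), add_zero]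

/-- The components of `I` other than `Q` do not lie in the maximal ideal at the isolated root `ζ`,
so their intersection is comaximal with it and is invisible to a functional supported at `ζ`. -/
theorem mem_dualSpace_of_isPrimaryComponentAt {I Q : Ideal (MvPolynomial (Fin n) ℝ)}
    (hQ : IsPrimaryComponentAt ζ I Q) {Λ : (Fin n →₀ ℕ) →₀ ℝ}
    (hΛ : ∀ g ∈ I, dualPairing ζ Λ g = 0) : Λ ∈ dualSpace ζ Q := by
  obtain ⟨-, -, S, hS, rfl⟩ := hQ
  have hm := maxIdealAt_isMaximal ζ
  have hSm : S.inf id ⊔ maxIdealAt ζ = ⊤ := by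
    by_contra h
    obtain ⟨P, hP, hPm⟩ :=
      hm.isPrime.inf_le'.1 (le_sup_left.trans (hm.eq_of_le h le_sup_right).ge)
    exact (hS P hP).2 (hm.isPrime.radical ▸ Ideal.radical_mono hPm)
  exact (mem_dualSpace_iff ζ).2 fun q hq => dualPairing_eq_zero_of_sup_eq_top ζ hSm hΛ hq

end Localization

section Adjoint

variable {n : ℕ}

/-- `Λ = ∑ λ_α d^α = ∑ (λ_α / α!) ∂^α` is the operator `(symbol Λ)(∂)`. -/
noncomputable def symbol : ((Fin n →₀ ℕ) →₀ ℝ) →ₗ[ℝ] MvPolynomial (Fin n) ℝ :=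
  Finsupp.lsum ℝ fun α => (∏ i, ((α i).factorial : ℝ))⁻¹ • monomial α

theorem symbol_single (α : Fin n →₀ ℕ) (c : ℝ) :
    symbol (Finsupp.single α c) = monomial α ((∏ i, ((α i).factorial : ℝ))⁻¹ * c) := by
  simp [symbol, smul_monomial]

theorem coeff_symbol (β : Fin n →₀ ℕ) (Λ : (Fin n →₀ ℕ) →₀ ℝ) :
    coeff β (symbol Λ) = (∏ i, ((β i).factorial : ℝ))⁻¹ * Λ β := by
  have hlin : lcoeff ℝ β ∘ₗ symbol = (∏ i, ((β i).factorial : ℝ))⁻¹ • Finsupp.lapply β :=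
    Finsupp.lhom_ext fun α c => by
      by_cases h : α = β
      · subst h; simp [symbol_single]
      · simp [symbol_single, coeff_monomial, h, Finsupp.single_eq_of_ne' h]
  exact LinearMap.congr_fun hlin Λ

theorem symbol_injective : Function.Injective (symbol : ((Fin n →₀ ℕ) →₀ ℝ) →ₗ[ℝ] _) :=
  fun Λ Λ' h => Finsupp.ext fun β => by
    have := congrArg (coeff β) h
    have hβ : ∏ i, ((β i).factorial : ℝ) ≠ 0 := by positivity
    rwa [coeff_symbol, coeff_symbol, mul_right_inj' (inv_ne_zero hβ)] at this

theorem constantCoeff_symbol (Λ : (Fin n →₀ ℕ) →₀ ℝ) : constantCoeff (symbol Λ) = Λ 0 := by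
  simp [constantCoeff_eq, coeff_symbol]

noncomputable def pderivAdjoint (j : Fin n) :
    ((Fin n →₀ ℕ) →₀ ℝ) →ₗ[ℝ] ((Fin n →₀ ℕ) →₀ ℝ) :=
  Finsupp.lsum ℝ fun α => ((α j + 1 : ℕ) : ℝ) • Finsupp.lsingle (α + Finsupp.single j 1)

theorem pderivAdjoint_single (j : Fin n) (α : Fin n →₀ ℕ) (c : ℝ) :
    pderivAdjoint j (Finsupp.single α c) =
      ((α j + 1 : ℕ) : ℝ) • Finsupp.single (α + Finsupp.single j 1) c := by
  simp [pderivAdjoint]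

theorem dualPairing_pderivAdjoint (ζ : Fin n → ℝ) (j : Fin n) (Λ : (Fin n →₀ ℕ) →₀ ℝ)
    (g : MvPolynomial (Fin n) ℝ) :
    dualPairing ζ (pderivAdjoint j Λ) g = dualPairing ζ Λ (pderiv j g) := by
  have hlin : (dualPairing ζ).flip g ∘ₗ pderivAdjoint j = (dualPairing ζ).flip (pderiv j g) :=
    Finsupp.lhom_ext fun α c => by
      simp only [LinearMap.comp_apply, LinearMap.flip_apply, pderivAdjoint_single, map_smul,
        dualPairing_single, nderiv_pderiv, smul_eq_mul]
      rw [smul_eq_C_mul, map_mul, eval_C]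
      ring
  exact LinearMap.congr_fun hlin Λ

theorem symbol_pderivAdjoint (j : Fin n) (Λ : (Fin n →₀ ℕ) →₀ ℝ) :
    symbol (pderivAdjoint j Λ) = X j * symbol Λ := by
  have hlin : symbol ∘ₗ pderivAdjoint j = LinearMap.mulLeft ℝ (X j) ∘ₗ symbol :=
    Finsupp.lhom_ext fun α c => by
      have hfact : ∏ i, (((α + Finsupp.single j 1 : Fin n →₀ ℕ) i).factorial : ℝ) =
          (∏ i, ((α i).factorial : ℝ)) * ((α j + 1 : ℕ) : ℝ) := by
        rw [Finset.prod_univ_eq_mul_prod_erase_of_eqOn (G := fun i => ((α i).factorial : ℝ)) j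
            fun l hl => by rw [Finsupp.add_single_one_apply_of_ne α hl],
          ← Finset.mul_prod_erase _ _ (Finset.mem_univ j)]
        simp only [Finsupp.add_apply, Finsupp.single_eq_same, Nat.factorial_succ, Nat.cast_mul]
        ring
      have hpos : ((α j + 1 : ℕ) : ℝ) ≠ 0 := by positivity
      have hprod : ∏ i, ((α i).factorial : ℝ) ≠ 0 := by positivity
      rw [LinearMap.comp_apply, LinearMap.comp_apply, pderivAdjoint_single, map_smul,
        symbol_single, symbol_single, LinearMap.mulLeft_apply, X, monomial_mul, one_mul,
        smul_monomial, hfact, add_comm (Finsupp.single j 1) α]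
      congr 1
      rw [smul_eq_mul]
      field_simp
  exact LinearMap.congr_fun hlin Λ

end Adjoint

section DirectionalDerivative

variable {n : ℕ} (v : Fin n → ℝ)

noncomputable def derivAlong :
    Derivation ℝ (MvPolynomial (Fin n) ℝ) (MvPolynomial (Fin n) ℝ) :=
  ∑ j, v j • pderiv j

noncomputable def derivAlongAdjoint : ((Fin n →₀ ℕ) →₀ ℝ) →ₗ[ℝ] ((Fin n →₀ ℕ) →₀ ℝ) :=
  ∑ j, v j • pderivAdjoint j

theorem derivAlong_apply (g : MvPolynomial (Fin n) ℝ) :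
    derivAlong v g = ∑ j, v j • pderiv j g := by
  rw [derivAlong, ← Derivation.coeFnAddMonoidHom_apply, map_sum, Finset.sum_apply]
  rfl

theorem dualPairing_derivAlongAdjoint (ζ : Fin n → ℝ) (Λ : (Fin n →₀ ℕ) →₀ ℝ)
    (g : MvPolynomial (Fin n) ℝ) :
    dualPairing ζ (derivAlongAdjoint v Λ) g = dualPairing ζ Λ (derivAlong v g) := by
  simp [derivAlongAdjoint, derivAlong_apply, dualPairing_pderivAdjoint]

theorem dualPairing_derivAlong (ζ : Fin n → ℝ) (Λ : (Fin n →₀ ℕ) →₀ ℝ)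
    (g : MvPolynomial (Fin n) ℝ) :
    dualPairing ζ Λ (derivAlong v g) = ∑ j, eval ζ (pderiv j (applyPoly Λ g)) * v j := by
  simp [derivAlong_apply, eval_pderiv_applyPoly, mul_comm]

theorem symbol_derivAlongAdjoint (Λ : (Fin n →₀ ℕ) →₀ ℝ) :
    symbol (derivAlongAdjoint v Λ) = (∑ j, C (v j) * X j) * symbol Λ := by
  simp [derivAlongAdjoint, symbol_pderivAdjoint, Finset.sum_mul, smul_eq_C_mul, mul_assoc]

theorem derivAlongAdjoint_injective (hv : v ≠ 0) : Function.Injective (derivAlongAdjoint v) := by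
  obtain ⟨j₀, hj₀⟩ := Function.ne_iff.1 hv
  have hL : (∑ j, C (v j) * X j : MvPolynomial (Fin n) ℝ) ≠ 0 := fun h => hj₀ <| by
    simpa [coeff_sum, coeff_C_mul, coeff_X, Finsupp.single_left_inj] using
      congrArg (coeff (Finsupp.single j₀ 1)) h
  intro Λ Λ' h
  apply symbol_injective
  have := congrArg symbol h
  rwa [symbol_derivAlongAdjoint, symbol_derivAlongAdjoint, mul_right_inj' hL] at this

theorem derivAlongAdjoint_apply_zero (Λ : (Fin n →₀ ℕ) →₀ ℝ) : derivAlongAdjoint v Λ 0 = 0 := by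
  rw [← constantCoeff_symbol, symbol_derivAlongAdjoint, map_mul]
  simp

theorem eq_zero_of_derivAlongAdjoint_mapsTo {D : Submodule ℝ ((Fin n →₀ ℕ) →₀ ℝ)}
    [FiniteDimensional ℝ D] (hδ : Finsupp.single 0 1 ∈ D)
    (hD : ∀ Λ ∈ D, derivAlongAdjoint v Λ ∈ D) : v = 0 := by
  by_contra hv
  let Φ : D →ₗ[ℝ] D := (derivAlongAdjoint v).restrict hD
  have hinj : Function.Injective Φ := fun Λ Λ' h =>
    Subtype.ext (derivAlongAdjoint_injective v hv (congrArg Subtype.val h))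
  obtain ⟨Λ, hΛ⟩ := @LinearMap.surjective_of_injective ℝ D _ _ _ _ Φ hinj ⟨_, hδ⟩
  have h0 := derivAlongAdjoint_apply_zero v Λ
  rw [show derivAlongAdjoint v Λ = Finsupp.single 0 1 from congrArg Subtype.val hΛ,
    Finsupp.single_eq_same] at h0
  exact one_ne_zero h0

end DirectionalDerivative

theorem single_zero_mem_dualSpace {n : ℕ} {ζ : Fin n → ℝ} {Q : Ideal (MvPolynomial (Fin n) ℝ)}
    (hQ : Q ≤ maxIdealAt ζ) : Finsupp.single 0 1 ∈ dualSpace ζ Q :=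
  (mem_dualSpace_iff ζ).2 fun p hp => by
    rw [dualPairing_single, nderiv_zero, one_mul, ← RingHom.mem_ker, ← maxIdealAt_eq_ker]
    exact hQ hp

theorem Matrix.rank_eq_card_of_mulVec_injective {m n R : Type*} [Fintype n] [Field R]
    {M : Matrix m n R} (hM : Function.Injective M.mulVec) : M.rank = Fintype.card n := by
  rw [Matrix.rank, LinearMap.finrank_range_of_inj hM, Module.finrank_fintype_fun_eq_card]

theorem IsPrimaryComponentAt.le {n : ℕ} {ζ : Fin n → ℝ} {I Q : Ideal (MvPolynomial (Fin n) ℝ)}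
    (hQ : IsPrimaryComponentAt ζ I Q) : I ≤ Q := by
  obtain ⟨-, -, S, -, rfl⟩ := hQ
  exact inf_le_right

theorem IsPrimaryComponentAt.le_maxIdealAt {n : ℕ} {ζ : Fin n → ℝ}
    {I Q : Ideal (MvPolynomial (Fin n) ℝ)} (hQ : IsPrimaryComponentAt ζ I Q) :
    Q ≤ maxIdealAt ζ :=
  hQ.2.1 ▸ Ideal.le_radical

theorem derivAlongAdjoint_mem_dualSpace {n : ℕ} {ζ : Fin n → ℝ}
    {s : Set (MvPolynomial (Fin n) ℝ)} {Q : Ideal (MvPolynomial (Fin n) ℝ)}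
    (hQ : IsPrimaryComponentAt ζ (Ideal.span s) Q) {v : Fin n → ℝ}
    (hv : ∀ x ∈ s, derivAlong v x ∈ dualSpacePerp ζ Q) {Λ : (Fin n →₀ ℕ) →₀ ℝ}
    (hΛ : Λ ∈ dualSpace ζ Q) : derivAlongAdjoint v Λ ∈ dualSpace ζ Q :=
  mem_dualSpace_of_isPrimaryComponentAt ζ hQ fun g hg => by
    rw [dualPairing_derivAlongAdjoint]
    exact derivation_mem_dualSpacePerp ζ (derivAlong v) hQ.le hv hg Λ hΛ

theorem stmt12_general {n s μ : ℕ} (f : Fin s → MvPolynomial (Fin n) ℝ) (ζ : Fin n → ℝ)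
    (Q : Ideal (MvPolynomial (Fin n) ℝ))
    (hQ : IsPrimaryComponentAt ζ (Ideal.span (Set.range f)) Q)
    (Λs : Fin μ → ((Fin n →₀ ℕ) →₀ ℝ))
    (hΛsp : Submodule.span ℝ (Set.range Λs) = dualSpace ζ Q) :
    Matrix.rank (Matrix.of fun (ik : Fin μ × Fin s) (j : Fin n) =>
      MvPolynomial.eval ζ (MvPolynomial.pderiv j (applyPoly (Λs ik.1) (f ik.2)))) = n := by
  have : FiniteDimensional ℝ (dualSpace ζ Q) :=
    hΛsp ▸ FiniteDimensional.span_of_finite ℝ (Set.finite_range Λs)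
  refine (Matrix.rank_eq_card_of_mulVec_injective ?_).trans (Fintype.card_fin n)
  refine (injective_iff_map_eq_zero (Matrix.mulVecLin _)).2 fun v hv => ?_
  have hrows : ∀ x ∈ Set.range f, derivAlong v x ∈ dualSpacePerp ζ Q := by
    rintro _ ⟨k, rfl⟩ Λ hΛ
    rw [← hΛsp] at hΛ
    refine (Submodule.span_le (p := LinearMap.ker ((dualPairing ζ).flip (derivAlong v (f k))))).2
      ?_ hΛ
    rintro _ ⟨i, rfl⟩
    simpa [dualPairing_derivAlong, Matrix.mulVec, dotProduct] using congrFun hv (i, k)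
  exact eq_zero_of_derivAlongAdjoint_mapsTo v (single_zero_mem_dualSpace hQ.le_maxIdealAt)
    fun Λ hΛ => derivAlongAdjoint_mem_dualSpace hQ hrows hΛ

/-- for a basis `(Λ₁,…,Λ_μ)` of the local dual space `𝒟_ζ`, the
`(μ·s) × n` Jacobian matrix of the system `𝒟f = (Λ_i(∂_x)[f_k])_{i,k}` with
respect to `x` has full rank `n` at `x = ζ`. -/
theorem stmt12 {n s μ : ℕ} (f : Fin s → MvPolynomial (Fin n) ℝ) (ζ : Fin n → ℝ)
    (Q : Ideal (MvPolynomial (Fin n) ℝ))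
    (hQ : IsPrimaryComponentAt ζ (Ideal.span (Set.range f)) Q)
    (Λs : Fin μ → ((Fin n →₀ ℕ) →₀ ℝ))
    (hΛli : LinearIndependent ℝ Λs)
    (hΛsp : Submodule.span ℝ (Set.range Λs) = dualSpace ζ Q) :
    Matrix.rank (Matrix.of fun (ik : Fin μ × Fin s) (j : Fin n) =>
      MvPolynomial.eval ζ (MvPolynomial.pderiv j (applyPoly (Λs ik.1) (f ik.2)))) = n :=
  stmt12_general f ζ Q hQ Λs hΛsp
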